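/- Let w and w' be infinite binary words, and suppose there exist nonnegative integers m, m' such that w_{m+i} = w'_{m'+i} for all i ≥ 1 (i.e., w and w' have a common tail after deleting m and m' initial letters respectively). Then limsup_{n→∞} (d_n(w)/n!)^{1/n} = limsup_{n→∞} (d_n(w')/n!)^{1/n} and liminf_{n→∞} (d_n(w)/n!)^{1/n} = liminf_{n→∞} (d_n(w')/n!)^{1/n}. -/

import Mathlib

/-!
Removing the first letter of `w` changes `d_n` only by a polynomial factor:
`d_n(w₂w₃⋯) ≤ d_{n+1}(w) ≤ (n+1) d_n(w₂w₃⋯)`. For the upper bound record the first value of `π`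
and standardize the remaining ones; for the lower bound prepend a new maximum or minimum,
according to the first letter. Since also `d_n ≥ 1`, i.e. `d_n / n! ≥ (n+1)⁻ⁿ`, taking roots turns
these factors into `(n+1)^(1/(n+1)) → 1`: the normalized roots `(d_{n+1}(w)/(n+1)!)^(1/(n+1))` and
`(d_n(w₂w₃⋯)/n!)^(1/n)` each bound the other up to that factor, so their difference tends to `0`.
Hence dropping finitely many letters changes neither limsup nor liminf, and `d_n(w)` depends on
`w₁, w₂, …` only.
-/

open Filter

/-- `dCount w n` is the number of permutations `π` of `{1,…,n}` (modeled as `Fin n`,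
zero-based) such that for every `1 ≤ i ≤ n-1`, `π(i) > π(i+1)` iff the `i`-th letter of the
infinite binary word `w` (1-indexed, `w 0` is irrelevant) equals `1` (i.e. `true`). -/
noncomputable def dCount (w : ℕ → Bool) (n : ℕ) : ℕ :=
  Nat.card {π : Equiv.Perm (Fin n) //
    ∀ i : ℕ, ∀ h : i + 1 < n,
      (π ⟨i + 1, h⟩ < π ⟨i, Nat.lt_of_succ_lt h⟩ ↔ w (i + 1) = true)}

open Equiv Topology

def HasDescentWord (w : ℕ → Bool) {n : ℕ} (π : Perm (Fin n)) : Prop :=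
  ∀ i : ℕ, ∀ h : i + 1 < n, (π ⟨i + 1, h⟩ < π ⟨i, Nat.lt_of_succ_lt h⟩ ↔ w (i + 1) = true)

theorem dCount_eq_card (w : ℕ → Bool) (n : ℕ) :
    dCount w n = Nat.card {π : Perm (Fin n) // HasDescentWord w π} := rfl

theorem dCount_congr {w w' : ℕ → Bool} (h : ∀ i, w (i + 1) = w' (i + 1)) : dCount w = dCount w' :=
  funext fun n => Nat.card_congr <| Equiv.subtypeEquivRight fun π => by simp only [h]

theorem dCount_le_factorial (w : ℕ → Bool) (n : ℕ) : dCount w n ≤ n.factorial :=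
  calc dCount w n ≤ Nat.card (Perm (Fin n)) := Nat.card_le_card_of_injective _ Subtype.val_injective
    _ = n.factorial := by simp [Fintype.card_perm]

/-- `consPerm v σ` takes the value `v` at `0` and lists the other values in the relative order
prescribed by `σ`. -/
def consPerm {n : ℕ} (v : Fin (n + 1)) (σ : Perm (Fin n)) : Perm (Fin (n + 1)) :=
  v.cycleRange.symm * Perm.decomposeFin.symm (0, σ)

@[simp]
theorem consPerm_zero {n : ℕ} (v : Fin (n + 1)) (σ : Perm (Fin n)) : consPerm v σ 0 = v := by
  simp [consPerm]

@[simp]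
theorem consPerm_succ {n : ℕ} (v : Fin (n + 1)) (σ : Perm (Fin n)) (i : Fin n) :
    consPerm v σ i.succ = v.succAbove (σ i) := by
  simp [consPerm, Perm.decomposeFin_symm_apply_succ, Fin.cycleRange_symm_succ]

theorem consPerm_injective {n : ℕ} :
    Function.Injective fun p : Fin (n + 1) × Perm (Fin n) => consPerm p.1 p.2 := by
  rintro ⟨v, σ⟩ ⟨v', σ'⟩ h
  have hv : v = v' := by simpa using congrArg (· 0) h
  subst hv
  refine Prod.ext rfl (Equiv.ext fun i => Fin.succAbove_right_injective (p := v) ?_)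
  simpa using congrArg (· i.succ) h

theorem consPerm_bijective {n : ℕ} :
    Function.Bijective fun p : Fin (n + 1) × Perm (Fin n) => consPerm p.1 p.2 :=
  (Fintype.bijective_iff_injective_and_card _).2
    ⟨consPerm_injective, by simp [Fintype.card_perm, Nat.factorial_succ]⟩

theorem hasDescentWord_consPerm_iff {w : ℕ → Bool} {n : ℕ} {v : Fin (n + 1)} {σ : Perm (Fin n)} :
    HasDescentWord w (consPerm v σ) ↔
      (∀ h : 0 < n, (v.succAbove (σ ⟨0, h⟩) < v ↔ w 1 = true)) ∧
        HasDescentWord (fun i => w (i + 1)) σ := by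
  have hsucc : ∀ i (h : i + 1 < n + 1),
      consPerm v σ ⟨i + 1, h⟩ = v.succAbove (σ ⟨i, Nat.succ_lt_succ_iff.1 h⟩) := fun i h =>
    consPerm_succ v σ ⟨i, _⟩
  constructor
  · intro H
    refine ⟨fun h => ?_, fun i hi => ?_⟩
    · simpa [hsucc] using H 0 (by omega)
    · have := H (i + 1) (by omega)
      rwa [hsucc, hsucc, Fin.succAbove_lt_succAbove_iff] at this
  · rintro ⟨h0, hσ⟩ (_ | i) hi
    · simpa [hsucc] using h0 (by omega)
    · rw [hsucc, hsucc, Fin.succAbove_lt_succAbove_iff]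
      exact hσ i (by omega)

theorem dCount_shift_le_dCount_succ (w : ℕ → Bool) (n : ℕ) :
    dCount (fun i => w (i + 1)) n ≤ dCount w (n + 1) := by
  let v : Fin (n + 1) := if w 1 then Fin.last n else 0
  have hv : ∀ x : Fin n, (v.succAbove x < v ↔ w 1 = true) := by
    intro x
    cases hw : w 1 <;> simp [v, hw, Fin.castSucc_lt_last]
  rw [dCount_eq_card, dCount_eq_card]
  refine Nat.card_le_card_of_injective
    (fun σ => ⟨consPerm v σ, hasDescentWord_consPerm_iff.2 ⟨fun _ => hv _, σ.2⟩⟩) fun σ τ h => ?_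
  have : (v, σ.1) = (v, τ.1) := consPerm_injective (congrArg Subtype.val h)
  exact Subtype.ext (congrArg Prod.snd this)

theorem dCount_succ_le (w : ℕ → Bool) (n : ℕ) :
    dCount w (n + 1) ≤ (n + 1) * dCount (fun i => w (i + 1)) n := by
  let e := Equiv.ofBijective _ (consPerm_bijective (n := n))
  have he : ∀ π, consPerm (e.symm π).1 (e.symm π).2 = π := e.apply_symm_apply
  let tail (π : {π : Perm (Fin (n + 1)) // HasDescentWord w π}) :
      Fin (n + 1) × {σ : Perm (Fin n) // HasDescentWord (fun i => w (i + 1)) σ} :=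
    ((e.symm π).1, ⟨(e.symm π).2, (hasDescentWord_consPerm_iff.1 ((he π).symm ▸ π.2)).2⟩)
  have htail : Function.Injective tail := fun π τ h => by
    simp only [tail, Prod.mk.injEq, Subtype.mk.injEq] at h
    exact Subtype.ext (e.symm.injective (Prod.ext h.1 h.2))
  simpa [dCount_eq_card] using Nat.card_le_card_of_injective tail htail

theorem one_le_dCount (w : ℕ → Bool) (n : ℕ) : 1 ≤ dCount w n := by
  induction n generalizing w with
  | zero =>
    rw [dCount_eq_card]
    have : Nonempty {π : Perm (Fin 0) // HasDescentWord w π} :=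
      ⟨⟨1, fun _ h => absurd h (by omega)⟩⟩
    exact Nat.card_pos
  | succ n ih => exact (ih _).trans (dCount_shift_le_dCount_succ w n)

noncomputable def dRoot (w : ℕ → Bool) (n : ℕ) : ℝ :=
  ((dCount w n : ℝ) / (Nat.factorial n : ℝ)) ^ (1 / (n : ℝ))

theorem dRoot_congr {w w' : ℕ → Bool} (h : ∀ i, w (i + 1) = w' (i + 1)) : dRoot w = dRoot w' := by
  unfold dRoot
  rw [dCount_congr h]

theorem dRoot_nonneg (w : ℕ → Bool) (n : ℕ) : 0 ≤ dRoot w n := by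
  unfold dRoot
  positivity

theorem dRoot_le_one (w : ℕ → Bool) (n : ℕ) : dRoot w n ≤ 1 := by
  refine Real.rpow_le_one (by positivity) ((div_le_one (by positivity)).2 ?_) (by positivity)
  exact_mod_cast dCount_le_factorial w n

theorem dRoot_pow (w : ℕ → Bool) {n : ℕ} (hn : n ≠ 0) :
    dRoot w n ^ n = dCount w n / n.factorial := by
  rw [dRoot, one_div, Real.rpow_inv_natCast_pow (by positivity) hn]

theorem one_le_succ_mul_dRoot (w : ℕ → Bool) {n : ℕ} (hn : n ≠ 0) : 1 ≤ (n + 1) * dRoot w n := by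
  rw [← one_le_pow_iff_of_nonneg (mul_nonneg (by positivity) (dRoot_nonneg w n)) hn, mul_pow,
    dRoot_pow w hn, mul_div_assoc', le_div_iff₀ (by positivity), one_mul]
  have hd : (1 : ℝ) ≤ dCount w n := by exact_mod_cast one_le_dCount w n
  have hfac : (n.factorial : ℝ) ≤ (n + 1) ^ n := by
    exact_mod_cast (Nat.factorial_le_pow n).trans (Nat.pow_le_pow_left n.le_succ n)
  nlinarith [pow_pos (show (0 : ℝ) < n + 1 by positivity) n]

theorem succ_rpow_one_div_pow (n : ℕ) :
    (((n + 1 : ℕ) : ℝ) ^ (1 / ((n + 1 : ℕ) : ℝ))) ^ (n + 1) = n + 1 := by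
  rw [one_div, Real.rpow_inv_natCast_pow (by positivity) n.succ_ne_zero]
  push_cast
  ring

theorem dRoot_shift_le_dRoot_succ_mul (w : ℕ → Bool) {n : ℕ} (hn : n ≠ 0) :
    dRoot (fun i => w (i + 1)) n ≤
      dRoot w (n + 1) * ((n + 1 : ℕ) : ℝ) ^ (1 / ((n + 1 : ℕ) : ℝ)) := by
  rw [← pow_le_pow_iff_left₀ (dRoot_nonneg _ _) (mul_nonneg (dRoot_nonneg _ _) (by positivity))
    n.succ_ne_zero]
  calc dRoot (fun i => w (i + 1)) n ^ (n + 1) ≤ dRoot (fun i => w (i + 1)) n ^ n :=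
        pow_le_pow_of_le_one (dRoot_nonneg _ _) (dRoot_le_one _ _) n.le_succ
    _ = dCount (fun i => w (i + 1)) n / n.factorial := dRoot_pow _ hn
    _ ≤ dCount w (n + 1) / n.factorial := by
        gcongr
        exact_mod_cast dCount_shift_le_dCount_succ w n
    _ = _ := by
        rw [mul_pow, dRoot_pow w n.succ_ne_zero, succ_rpow_one_div_pow, Nat.factorial_succ]
        push_cast
        field_simp

theorem dRoot_succ_le_dRoot_shift_mul (w : ℕ → Bool) {n : ℕ} (hn : n ≠ 0) :
    dRoot w (n + 1) ≤
      dRoot (fun i => w (i + 1)) n * ((n + 1 : ℕ) : ℝ) ^ (1 / ((n + 1 : ℕ) : ℝ)) := by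
  rw [← pow_le_pow_iff_left₀ (dRoot_nonneg _ _) (mul_nonneg (dRoot_nonneg _ _) (by positivity))
    n.succ_ne_zero]
  calc dRoot w (n + 1) ^ (n + 1) = dCount w (n + 1) / (n + 1).factorial :=
        dRoot_pow w n.succ_ne_zero
    _ ≤ dCount (fun i => w (i + 1)) n / n.factorial := by
        rw [Nat.factorial_succ, Nat.cast_mul, ← div_div,
          div_le_div_iff_of_pos_right (by positivity), div_le_iff₀' (by positivity)]
        exact_mod_cast dCount_succ_le w n
    _ = dRoot (fun i => w (i + 1)) n ^ n := (dRoot_pow _ hn).symm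
    _ ≤ dRoot (fun i => w (i + 1)) n ^ n * ((n + 1) * dRoot (fun i => w (i + 1)) n) :=
        le_mul_of_one_le_right (pow_nonneg (dRoot_nonneg _ _) n) (one_le_succ_mul_dRoot _ hn)
    _ = _ := by
        rw [mul_pow, succ_rpow_one_div_pow, pow_succ]
        ring

theorem tendsto_sub_nhds_zero_of_le_mul {ι : Type*} {l : Filter ι} {x y e : ι → ℝ}
    (hx : IsBoundedUnder (· ≤ ·) l (norm ∘ x)) (hy : IsBoundedUnder (· ≤ ·) l (norm ∘ y))
    (he : Tendsto e l (𝓝 1)) (hxy : ∀ᶠ i in l, x i ≤ y i * e i)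
    (hyx : ∀ᶠ i in l, y i ≤ x i * e i) :
    Tendsto (x - y) l (𝓝 0) := by
  have he' : Tendsto (fun i => e i - 1) l (𝓝 0) := by simpa using he.sub_const 1
  have hlow : Tendsto (fun i => -(x i * (e i - 1))) l (𝓝 0) := by
    simpa using (isBoundedUnder_le_mul_tendsto_zero hx he').neg
  refine tendsto_of_tendsto_of_tendsto_of_le_of_le' hlow
    (isBoundedUnder_le_mul_tendsto_zero hy he') ?_ ?_
  · filter_upwards [hyx] with i h
    simp only [Pi.sub_apply]
    linarith
  · filter_upwards [hxy] with i h
    simp only [Pi.sub_apply]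
    linarith

theorem norm_dRoot_le_one (w : ℕ → Bool) (n : ℕ) : ‖dRoot w n‖ ≤ 1 :=
  (Real.norm_of_nonneg (dRoot_nonneg w n)).trans_le (dRoot_le_one w n)

theorem tendsto_dRoot_succ_sub_dRoot_shift (w : ℕ → Bool) :
    Tendsto (fun n => dRoot w (n + 1) - dRoot (fun i => w (i + 1)) n) atTop (𝓝 0) := by
  have he : Tendsto (fun n : ℕ => ((n + 1 : ℕ) : ℝ) ^ (1 / ((n + 1 : ℕ) : ℝ))) atTop (𝓝 1) :=
    tendsto_rpow_div.comp (tendsto_natCast_atTop_atTop.comp (tendsto_add_atTop_nat 1))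
  exact tendsto_sub_nhds_zero_of_le_mul (isBoundedUnder_of ⟨1, fun _ => norm_dRoot_le_one _ _⟩)
    (isBoundedUnder_of ⟨1, fun _ => norm_dRoot_le_one _ _⟩) he
    ((eventually_ne_atTop 0).mono fun _ hn => dRoot_succ_le_dRoot_shift_mul w hn)
    ((eventually_ne_atTop 0).mono fun _ hn => dRoot_shift_le_dRoot_succ_mul w hn)

theorem tendsto_dRoot_add_sub_dRoot_drop (w : ℕ → Bool) (m : ℕ) :
    Tendsto (fun n => dRoot w (n + m) - dRoot (fun i => w (m + i)) n) atTop (𝓝 0) := by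
  induction m with
  | zero => simp
  | succ m ih =>
    have := (ih.comp (tendsto_add_atTop_nat 1)).add
      (tendsto_dRoot_succ_sub_dRoot_shift fun i => w (m + i))
    rw [add_zero] at this
    refine this.congr fun n => ?_
    simp only [Function.comp_apply, add_right_comm _ 1, ← add_assoc]
    exact sub_add_sub_cancel _ _ _

theorem limsup_eq_of_tendsto_sub {ι : Type*} {l : Filter ι} [l.NeBot] {u v : ι → ℝ}
    (hv₁ : IsBoundedUnder (· ≤ ·) l v) (hv₂ : IsBoundedUnder (· ≥ ·) l v)
    (h : Tendsto (u - v) l (𝓝 0)) : limsup u l = limsup v l := by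
  rw [← sub_add_cancel u v]
  apply le_antisymm
  · calc limsup (u - v + v) l ≤ limsup (u - v) l + limsup v l :=
          limsup_add_le h.isBoundedUnder_ge h.isBoundedUnder_le hv₂.isCoboundedUnder_le hv₁
      _ = limsup v l := by rw [h.limsup_eq, zero_add]
  · calc limsup v l = limsup v l + liminf (u - v) l := by rw [h.liminf_eq, add_zero]
      _ ≤ limsup (v + (u - v)) l :=
          le_limsup_add hv₁ hv₂.isCoboundedUnder_le h.isBoundedUnder_le h.isBoundedUnder_ge
      _ = limsup (u - v + v) l := by rw [add_comm]

theorem liminf_eq_of_tendsto_sub {ι : Type*} {l : Filter ι} [l.NeBot] {u v : ι → ℝ}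
    (hv₁ : IsBoundedUnder (· ≤ ·) l v) (hv₂ : IsBoundedUnder (· ≥ ·) l v)
    (h : Tendsto (u - v) l (𝓝 0)) : liminf u l = liminf v l := by
  rw [← sub_add_cancel u v]
  apply le_antisymm
  · calc liminf (u - v + v) l ≤ limsup (u - v) l + liminf v l :=
          liminf_add_le h.isBoundedUnder_ge h.isBoundedUnder_le hv₂ hv₁.isCoboundedUnder_ge
      _ = liminf v l := by rw [h.limsup_eq, zero_add]
  · calc liminf v l = liminf (u - v) l + liminf v l := by rw [h.liminf_eq, zero_add]
      _ ≤ liminf (u - v + v) l :=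
          le_liminf_add h.isBoundedUnder_ge h.isBoundedUnder_le hv₂ hv₁.isCoboundedUnder_ge

theorem stmt9 (w w' : ℕ → Bool) (m m' : ℕ)
    (h : ∀ i : ℕ, 1 ≤ i → w (m + i) = w' (m' + i)) :
    limsup (fun n : ℕ => ((dCount w n : ℝ) / (Nat.factorial n : ℝ)) ^ (1 / (n : ℝ))) atTop =
      limsup (fun n : ℕ => ((dCount w' n : ℝ) / (Nat.factorial n : ℝ)) ^ (1 / (n : ℝ))) atTop ∧
    liminf (fun n : ℕ => ((dCount w n : ℝ) / (Nat.factorial n : ℝ)) ^ (1 / (n : ℝ))) atTop =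
      liminf (fun n : ℕ => ((dCount w' n : ℝ) / (Nat.factorial n : ℝ)) ^ (1 / (n : ℝ))) atTop := by
  change limsup (dRoot w) atTop = limsup (dRoot w') atTop ∧
    liminf (dRoot w) atTop = liminf (dRoot w') atTop
  have htail : dRoot (fun i => w (m + i)) = dRoot (fun i => w' (m' + i)) :=
    dRoot_congr fun i => h (i + 1) (Nat.le_add_left 1 i)
  have hw := tendsto_dRoot_add_sub_dRoot_drop w m
  have hw' := tendsto_dRoot_add_sub_dRoot_drop w' m'
  rw [htail] at hw
  have hle : IsBoundedUnder (· ≤ ·) atTop (dRoot fun i => w' (m' + i)) :=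
    isBoundedUnder_of ⟨1, dRoot_le_one _⟩
  have hge : IsBoundedUnder (· ≥ ·) atTop (dRoot fun i => w' (m' + i)) :=
    isBoundedUnder_of ⟨0, dRoot_nonneg _⟩
  rw [← limsup_nat_add _ m, ← limsup_nat_add (dRoot w') m', ← liminf_nat_add _ m,
    ← liminf_nat_add (dRoot w') m']
  exact ⟨(limsup_eq_of_tendsto_sub hle hge hw).trans (limsup_eq_of_tendsto_sub hle hge hw').symm,
    (liminf_eq_of_tendsto_sub hle hge hw).trans (liminf_eq_of_tendsto_sub hle hge hw').symm⟩
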